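/- arXiv:1507.00605 — 5 statements merged into one kernel-verified Lean document; each statement's English description precedes it below -/
import Mathlib

section
/- Let ξ₁, …, ξₙ (n ≥ 2) be real random variables and α > 0, Δ > 0 such that E[exp((|ξᵢ|/Δ)^α)] ≤ 2 for each i. Then E[exp((sup_{1≤i≤n} |ξᵢ| / (Δ · (2 log n / log 2)^{1/α}))^α)] ≤ 2. -/
open MeasureTheory

/-- Jensen-type inequality: for a probability measure, `∫ F^(1/K) ≤ (∫ F)^(1/K)` for `K > 1`. -/
lemma lintegral_rpow_one_div_le {Ω : Type*} [MeasurableSpace Ω] (μ : Measure Ω)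
    [IsProbabilityMeasure μ] {F : Ω → ENNReal} (hF : AEMeasurable F μ) {K : ℝ} (hK : 1 < K) :
    ∫⁻ ω, (F ω) ^ (1 / K) ∂μ ≤ (∫⁻ ω, F ω ∂μ) ^ (1 / K) := by
  have hpq : K.HolderConjugate (Real.conjExponent K) := Real.HolderConjugate.conjExponent hK
  have hf : AEMeasurable (fun ω => (F ω) ^ (1 / K)) μ := hF.pow_const _
  have hg : AEMeasurable (fun _ : Ω => (1 : ENNReal)) μ := aemeasurable_const
  have H := ENNReal.lintegral_mul_le_Lp_mul_Lq μ hpq hf hg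
  have hK0 : K ≠ 0 := by positivity
  have hEq : ∀ ω : Ω, ((F ω) ^ (1 / K)) ^ K = F ω := fun ω => by
    rw [← ENNReal.rpow_mul, one_div, inv_mul_cancel₀ hK0, ENNReal.rpow_one]
  simp only [Pi.mul_apply, mul_one, ENNReal.one_rpow, lintegral_one, measure_univ, hEq] at H
  exact H

theorem exp_moment_sup_bound {Ω : Type*} [MeasurableSpace Ω] (μ : Measure Ω)
    [IsProbabilityMeasure μ] (n : ℕ) (hn : 2 ≤ n) (ξ : Fin n → Ω → ℝ)
    (hmeas : ∀ i, Measurable (ξ i)) (α Δ : ℝ) (hα : 0 < α) (hΔ : 0 < Δ)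
    (h : ∀ i, ∫⁻ ω, ENNReal.ofReal (Real.exp ((|ξ i ω| / Δ) ^ α)) ∂μ ≤ 2) :
    ∫⁻ ω, ENNReal.ofReal
        (Real.exp (((⨆ i, |ξ i ω|) /
          (Δ * (2 * Real.log n / Real.log 2) ^ (1 / α))) ^ α)) ∂μ ≤ 2 := by
  have hne : Nonempty (Fin n) := ⟨⟨0, by omega⟩⟩
  have hlog2 : (0 : ℝ) < Real.log 2 := Real.log_pos one_lt_two
  have hlogn : Real.log 2 ≤ Real.log n := Real.log_le_log (by norm_num) (by exact_mod_cast hn)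
  have hlogn0 : 0 < Real.log n := lt_of_lt_of_le hlog2 hlogn
  set K : ℝ := 2 * Real.log n / Real.log 2 with hKdef
  have hK2 : (2 : ℝ) ≤ K := by
    rw [hKdef, le_div_iff₀ hlog2]; nlinarith
  have hK1 : (1 : ℝ) < K := lt_of_lt_of_le one_lt_two hK2
  have hK0 : (0 : ℝ) < K := lt_trans one_pos hK1
  set c : ℝ := K ^ (1 / α) with hcdef
  have hc0 : 0 < c := Real.rpow_pos_of_pos hK0 _
  have hcα : c ^ α = K := by
    rw [hcdef, ← Real.rpow_mul hK0.le, one_div, inv_mul_cancel₀ hα.ne', Real.rpow_one]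
  -- the sum function
  set F : Ω → ENNReal := fun ω => ∑ i, ENNReal.ofReal (Real.exp ((|ξ i ω| / Δ) ^ α)) with hF
  have hmeas' : ∀ i : Fin n, Measurable fun ω =>
      ENNReal.ofReal (Real.exp ((|ξ i ω| / Δ) ^ α)) := by
    intro i
    exact ((((hmeas i).abs.div_const Δ).pow_const α).exp).ennreal_ofReal
  have hFmeas : Measurable F := Finset.measurable_sum _ fun i _ => hmeas' i
  -- pointwise bound
  have hpt : ∀ ω, ENNReal.ofReal
      (Real.exp (((⨆ i, |ξ i ω|) / (Δ * c)) ^ α)) ≤ (F ω) ^ (1 / K) := by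
    intro ω
    obtain ⟨i₀, hi₀⟩ := Finite.exists_max fun i => |ξ i ω|
    have hsup : (⨆ i, |ξ i ω|) = |ξ i₀ ω| :=
      le_antisymm (ciSup_le hi₀) (le_ciSup (f := fun i => |ξ i ω|) (Set.Finite.bddAbove (Set.finite_range _)) i₀)
    rw [hsup]
    have habs : (0 : ℝ) ≤ |ξ i₀ ω| := abs_nonneg _
    have key : (|ξ i₀ ω| / (Δ * c)) ^ α = (|ξ i₀ ω| / Δ) ^ α * (1 / K) := by
      rw [div_mul_eq_div_div, Real.div_rpow (by positivity) hc0.le, hcα, div_eq_mul_one_div]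
    rw [key, Real.exp_mul, ← ENNReal.ofReal_rpow_of_pos (Real.exp_pos _)]
    refine ENNReal.rpow_le_rpow ?_ (by positivity)
    exact Finset.single_le_sum (f := fun i =>
      ENNReal.ofReal (Real.exp ((|ξ i ω| / Δ) ^ α))) (fun i _ => zero_le) (Finset.mem_univ i₀)
  calc ∫⁻ ω, ENNReal.ofReal (Real.exp (((⨆ i, |ξ i ω|) / (Δ * c)) ^ α)) ∂μ
      ≤ ∫⁻ ω, (F ω) ^ (1 / K) ∂μ := lintegral_mono hpt
    _ ≤ (∫⁻ ω, F ω ∂μ) ^ (1 / K) := lintegral_rpow_one_div_le μ hFmeas.aemeasurable hK1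
    _ ≤ ((n : ENNReal) * 2) ^ (1 / K) := by
        refine ENNReal.rpow_le_rpow ?_ (by positivity)
        rw [hF]
        calc ∫⁻ ω, ∑ i, ENNReal.ofReal (Real.exp ((|ξ i ω| / Δ) ^ α)) ∂μ
            = ∑ i, ∫⁻ ω, ENNReal.ofReal (Real.exp ((|ξ i ω| / Δ) ^ α)) ∂μ :=
              lintegral_finset_sum _ fun i _ => hmeas' i
          _ ≤ ∑ _i : Fin n, 2 := Finset.sum_le_sum fun i _ => h i
          _ = (n : ENNReal) * 2 := by simp [mul_comm]
    _ ≤ 2 := by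
        have hn0 : (0 : ℝ) < 2 * n := by positivity
        have h1 : ((n : ENNReal) * 2) = ENNReal.ofReal (2 * n) := by
          rw [ENNReal.ofReal_mul (by norm_num)]
          simp [mul_comm, ENNReal.ofReal_natCast]
        rw [h1, ENNReal.ofReal_rpow_of_pos hn0]
        have h2 : ((2 : ℝ) * n) ^ (1 / K) ≤ 2 := by
          rw [Real.rpow_def_of_pos hn0]
          nth_rewrite 2 [show (2 : ℝ) = Real.exp (Real.log 2) from (Real.exp_log two_pos).symm]
          rw [Real.exp_le_exp]
          have hlog2n : Real.log (2 * n) = Real.log 2 + Real.log n :=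
            Real.log_mul two_ne_zero (by positivity)
          have hKlog : K * Real.log 2 = 2 * Real.log n := by
            rw [hKdef]; field_simp
          rw [hlog2n]
          rw [mul_one_div, div_le_iff₀ hK0]
          linarith [hKlog, hlogn]
        calc ENNReal.ofReal (((2 : ℝ) * n) ^ (1 / K)) ≤ ENNReal.ofReal 2 :=
              ENNReal.ofReal_le_ofReal h2
          _ = 2 := by norm_num
end

section
/- Under the setup of the previous statement (Ψ strictly increasing continuous with Ψ(0)=0, d a pseudo-metric on [0,1] with F(1) = 𝒱(Ψ,d) < ∞), the covering numbers of ([0,1], d) satisfy N([0,1], d, ε) ≤ 4·F(1)/Ψ(ε) for all 0 < ε < Ψ^{−1}(F(1)). -/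
/-!
A maximal `ε`-separated subset of `[0, 1]` is an `ε`-net. Its points in `(0, 1]`, listed in
increasing order and preceded by `0`, form a partition of `[0, 1]` whose consecutive points (after
the first) are `ε`-apart, so the partition sum of `Ψ ∘ d` is at least `(n - 2) Ψ(ε)` for a net of
`n` points. Hence `n ≤ F(1)/Ψ(ε) + 2`, which is at most `4 F(1)/Ψ(ε)` because `Ψ(ε) < F(1)`.
-/

/-- The set of all sums `∑ g(tᵢ, tᵢ₊₁)` over partitions `a = t₀ < t₁ < ⋯ < tₙ = b`. -/
def partitionSums (g : ℝ → ℝ → ℝ) (a b : ℝ) : Set ℝ :=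
  {S | ∃ (n : ℕ) (t : ℕ → ℝ), 0 < n ∧ t 0 = a ∧ t n = b ∧
    (∀ i < n, t i < t (i + 1)) ∧ S = ∑ i ∈ Finset.range n, g (t i) (t (i + 1))}

namespace partitionSums

variable {g : ℝ → ℝ → ℝ} {a b c : ℝ}

theorem self_mem (hab : a < b) : g a b ∈ partitionSums g a b :=
  ⟨1, fun i => if i = 0 then a else b, one_pos, rfl, rfl, by simpa using hab, by simp⟩

theorem add_mem {S : ℝ} (hS : S ∈ partitionSums g a b) (hbc : b < c) :
    S + g b c ∈ partitionSums g a c := by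
  obtain ⟨n, t, hn, ht0, htn, hmono, rfl⟩ := hS
  set t' : ℕ → ℝ := fun i => if i ≤ n then t i else c
  have hagree : ∀ i ≤ n, t' i = t i := fun i hi => if_pos hi
  have hlast : t' (n + 1) = c := if_neg (by omega)
  refine ⟨n + 1, t', n.succ_pos, by rw [hagree 0 n.zero_le, ht0], hlast, ?_, ?_⟩
  · intro i hi
    rcases Nat.lt_or_ge i n with hin | hin
    · rw [hagree i hin.le, hagree (i + 1) hin]
      exact hmono i hin
    · obtain rfl : i = n := by omega
      rw [hagree i le_rfl, hlast, htn]
      exact hbc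
  · rw [Finset.sum_range_succ, hagree n le_rfl, hlast, htn]
    congr 1
    refine Finset.sum_congr rfl fun i hi => ?_
    rw [Finset.mem_range] at hi
    rw [hagree i hi.le, hagree (i + 1) hi]

theorem exists_mem_card_mul_le {δ : ℝ} (hg : ∀ x y, 0 ≤ g x y) (s : Finset ℝ)
    (hsep : (s : Set ℝ).Pairwise fun x y => δ ≤ g x y) (hab : a < b)
    (hs : ∀ x ∈ s, a < x ∧ x < b ∧ δ ≤ g x b) :
    ∃ S ∈ partitionSums g a b, s.card * δ ≤ S := by
  classical
  induction s using Finset.induction_on_max generalizing b with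
  | empty => exact ⟨g a b, self_mem hab, by simpa using hg a b⟩
  | insert m s hlt ih =>
    have hm : m ∉ s := fun hm => lt_irrefl m (hlt m hm)
    obtain ⟨ham, hmb, hδm⟩ := hs m (s.mem_insert_self m)
    obtain ⟨S, hS, hcard⟩ := ih (hsep.mono (by simp)) ham fun x hx =>
      ⟨(hs x (Finset.mem_insert_of_mem hx)).1, hlt x hx,
        hsep (by simp [hx]) (by simp) (hlt x hx).ne⟩
    refine ⟨S + g m b, add_mem hS hmb, ?_⟩
    rw [Finset.card_insert_of_notMem hm]
    push_cast
    linarith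

variable (hg : ∀ x y, 0 ≤ g x y) (hbdd : BddAbove (partitionSums g a b))
include hg hbdd

theorem sSup_nonneg (hab : a < b) : 0 ≤ sSup (partitionSums g a b) :=
  (hg a b).trans (le_csSup hbdd (self_mem hab))

theorem le_sSup_of_le {S : ℝ} (hS : S ∈ partitionSums g a c) (hcb : c ≤ b) :
    S ≤ sSup (partitionSums g a b) := by
  rcases hcb.lt_or_eq with hcb | rfl
  · calc S ≤ S + g c b := le_add_of_nonneg_right (hg c b)
      _ ≤ sSup (partitionSums g a b) := le_csSup hbdd (add_mem hS hcb)
  · exact le_csSup hbdd hS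

theorem card_sub_one_mul_le_sSup {δ : ℝ} (hδ : 0 ≤ δ) (hab : a < b) (s : Finset ℝ)
    (hs : ↑s ⊆ Set.Ioc a b) (hsep : (s : Set ℝ).Pairwise fun x y => δ ≤ g x y) :
    ((s.card : ℝ) - 1) * δ ≤ sSup (partitionSums g a b) := by
  rcases s.eq_empty_or_nonempty with rfl | hne
  · simpa using (neg_nonpos.mpr hδ).trans (sSup_nonneg hg hbdd hab)
  set m := s.max' hne
  have hm : m ∈ s := s.max'_mem hne
  have ham : a < m := (hs hm).1
  obtain ⟨S, hS, hcard⟩ := exists_mem_card_mul_le hg (s.erase m)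
    (hsep.mono (by simp)) ham fun x hx =>
      ⟨(hs (Finset.mem_of_mem_erase hx)).1, s.lt_max'_of_mem_erase_max' hne hx,
        hsep (Finset.mem_of_mem_erase hx) hm (Finset.ne_of_mem_erase hx)⟩
  rw [Finset.card_erase_of_mem hm, Nat.cast_pred (Finset.card_pos.mpr hne)] at hcard
  exact hcard.trans (le_sSup_of_le hg hbdd hS (hs hm).2)

theorem card_sub_two_mul_le_sSup {δ : ℝ} (hδ : 0 ≤ δ) (hab : a < b) (s : Finset ℝ)
    (hs : ↑s ⊆ Set.Icc a b) (hsep : (s : Set ℝ).Pairwise fun x y => δ ≤ g x y) :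
    ((s.card : ℝ) - 2) * δ ≤ sSup (partitionSums g a b) := by
  classical
  have herase : ↑(s.erase a) ⊆ Set.Ioc a b := fun x hx =>
    ⟨(hs (Finset.mem_of_mem_erase hx)).1.lt_of_ne' (Finset.ne_of_mem_erase hx),
      (hs (Finset.mem_of_mem_erase hx)).2⟩
  have hcard : (s.card : ℝ) ≤ (s.erase a).card + 1 := by
    exact_mod_cast (Nat.sub_le_iff_le_add.mp s.pred_card_le_card_erase)
  calc ((s.card : ℝ) - 2) * δ ≤ ((s.erase a).card - 1) * δ :=
        mul_le_mul_of_nonneg_right (by linarith) hδ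
    _ ≤ sSup (partitionSums g a b) :=
      card_sub_one_mul_le_sSup hg hbdd hδ hab _ herase (hsep.mono (by simp))

end partitionSums

theorem exists_separated_net_of_card_le {α : Type*} (d : α → α → ℝ) (hd0 : ∀ x, d x x = 0)
    (hdsymm : ∀ x y, d x y = d y x) {T : Set α} {ε : ℝ} (hε : 0 < ε) {B : ℝ}
    (hB : ∀ s : Finset α, ↑s ⊆ T → (s : Set α).Pairwise (fun x y => ε ≤ d x y) →
      (s.card : ℝ) ≤ B) :
    ∃ s : Finset α, ↑s ⊆ T ∧ (s : Set α).Pairwise (fun x y => ε ≤ d x y) ∧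
      ∀ x ∈ T, ∃ c ∈ s, d c x < ε := by
  classical
  let P : ℕ → Prop := fun n => ∃ s : Finset α, ↑s ⊆ T ∧
    (s : Set α).Pairwise (fun x y => ε ≤ d x y) ∧ s.card = n
  obtain ⟨s, hsT, hsep, hcard⟩ : P (Nat.findGreatest P ⌊B⌋₊) :=
    Nat.findGreatest_spec (Nat.zero_le _) ⟨∅, by simp, by simp, rfl⟩
  refine ⟨s, hsT, hsep, fun x hx => ?_⟩
  by_contra! hfar
  have hxs : x ∉ s := fun hxs => (hfar x hxs).not_gt (by rw [hd0]; exact hε)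
  have hsep' : (↑(insert x s) : Set α).Pairwise (fun x y => ε ≤ d x y) := by
    rw [Finset.coe_insert, Set.pairwise_insert]
    exact ⟨hsep, fun y hy _ => ⟨(hfar y hy).trans_eq (hdsymm y x), hfar y hy⟩⟩
  have hsT' : ↑(insert x s) ⊆ T := by
    rw [Finset.coe_insert]
    exact Set.insert_subset hx hsT
  have hcard' : (insert x s).card = Nat.findGreatest P ⌊B⌋₊ + 1 := by
    rw [Finset.card_insert_of_notMem hxs, hcard]
  have hle : Nat.findGreatest P ⌊B⌋₊ + 1 ≤ Nat.findGreatest P ⌊B⌋₊ :=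
    Nat.le_findGreatest (Nat.le_floor (hcard' ▸ hB _ hsT' hsep')) ⟨_, hsT', hsep', hcard'⟩
  omega

theorem covering_number_bound_general (Ψ : ℝ → ℝ)
    (hΨm : StrictMonoOn Ψ (Set.Ici 0)) (hΨ0 : Ψ 0 = 0)
    (d : ℝ → ℝ → ℝ) (hd0 : ∀ s, d s s = 0) (hdnn : ∀ s t, 0 ≤ d s t)
    (hdsymm : ∀ s t, d s t = d t s)
    (hbdd : BddAbove (partitionSums (fun s t => Ψ (d s t)) 0 1)) :
    ∀ ε : ℝ, 0 < ε → Ψ ε < sSup (partitionSums (fun s t => Ψ (d s t)) 0 1) →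
      ∃ s : Finset ℝ, (↑s : Set ℝ) ⊆ Set.Icc 0 1 ∧
        (∀ x ∈ Set.Icc (0 : ℝ) 1, ∃ c ∈ s, d c x < ε) ∧
        (s.card : ℝ) ≤ 4 * sSup (partitionSums (fun u v => Ψ (d u v)) 0 1) / Ψ ε := by
  intro ε hε hεF
  set F := sSup (partitionSums (fun s t => Ψ (d s t)) 0 1)
  have hΨε : 0 < Ψ ε := hΨ0 ▸ hΨm Set.self_mem_Ici hε.le hε
  have hg : ∀ s t, 0 ≤ Ψ (d s t) := fun s t =>
    hΨ0 ▸ hΨm.monotoneOn Set.self_mem_Ici (hdnn s t) (hdnn s t)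
  have hcard : ∀ s : Finset ℝ, (s : Set ℝ) ⊆ Set.Icc 0 1 →
      (s : Set ℝ).Pairwise (fun x y => ε ≤ d x y) → (s.card : ℝ) ≤ F / Ψ ε + 2 := by
    intro s hs hsep
    have := partitionSums.card_sub_two_mul_le_sSup hg hbdd hΨε.le one_pos s hs
      (hsep.mono' fun x y h => hΨm.monotoneOn hε.le (hdnn x y) h)
    linarith [(le_div_iff₀ hΨε).mpr this]
  obtain ⟨s, hs, hsep, hcov⟩ := exists_separated_net_of_card_le d hd0 hdsymm hε hcard
  have hratio : 1 < F / Ψ ε := (one_lt_div hΨε).mpr hεF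
  refine ⟨s, hs, hcov, ?_⟩
  calc (s.card : ℝ) ≤ F / Ψ ε + 2 := hcard s hs hsep
    _ ≤ 4 * F / Ψ ε := by rw [mul_div_assoc]; linarith

theorem covering_number_bound (Ψ : ℝ → ℝ) (hΨc : ContinuousOn Ψ (Set.Ici 0))
    (hΨm : StrictMonoOn Ψ (Set.Ici 0)) (hΨ0 : Ψ 0 = 0)
    (hΨtop : Filter.Tendsto Ψ Filter.atTop Filter.atTop)
    (d : ℝ → ℝ → ℝ) (hd0 : ∀ s, d s s = 0) (hdnn : ∀ s t, 0 ≤ d s t)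
    (hdsymm : ∀ s t, d s t = d t s) (hdtri : ∀ s t u, d s u ≤ d s t + d t u)
    (hbdd : BddAbove (partitionSums (fun s t => Ψ (d s t)) 0 1)) :
    ∀ ε : ℝ, 0 < ε → Ψ ε < sSup (partitionSums (fun s t => Ψ (d s t)) 0 1) →
      ∃ s : Finset ℝ, (↑s : Set ℝ) ⊆ Set.Icc 0 1 ∧
        (∀ x ∈ Set.Icc (0 : ℝ) 1, ∃ c ∈ s, d c x < ε) ∧
        (s.card : ℝ) ≤ 4 * sSup (partitionSums (fun u v => Ψ (d u v)) 0 1) / Ψ ε :=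
  covering_number_bound_general Ψ hΨm hΨ0 d hd0 hdnn hdsymm hbdd
end

section
/- Let X = {X(t) : t ∈ [0,1]} be a centered Gaussian process with a.s. bounded Φ-variation, where Φ : ℝ₊ → ℝ₊ is convex, strictly increasing, Φ(0)=0, and satisfies the Δ₂-condition. Set d(s,t) = ‖X(s)−X(t)‖_{L²}. Then 𝒱(Φ, c·d) < ∞ for c = √(2/π), i.e., sup over partitions of Σᵢ Φ(c·d(tᵢ,t_{i−1})) is finite. -/
/-! Fix countably many partitions whose `Φ(√(2/π)·d)`-sums are unbounded. Since the variation
of `X` is a.s. finite, some level `k` bounds all their `Φ(|ΔX|)`-sums on an event `A` of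
probability `≥ 9/10`; countability makes `A` measurable. An increment `Z ~ N(0, v)` has density
at most `1/√(2πv)`, so `|Z| ≥ √v/2` with probability `≥ 3/5`, hence on a set of probability
`≥ 1/2` inside `A`; therefore `Φ(√v/2) ≤ 2·E[Φ(|Z|); A]`. Summing over a partition bounds
`∑ Φ(√v/2)` by `2k`, and as `d = √v` and `√(2/π) ≤ 1`, one `Δ₂` step bounds `∑ Φ(√(2/π)·d)`
by `2Ck`. -/

open MeasureTheory ProbabilityTheory Real Set Filter
open scoped ENNReal NNReal

lemma gaussianPDFReal_le_inv_sqrt (m : ℝ) (v : ℝ≥0) (x : ℝ) :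
    gaussianPDFReal m v x ≤ (√(2 * π * v))⁻¹ := by
  rw [gaussianPDFReal]
  refine mul_le_of_le_one_right (by positivity) (exp_le_one_iff.2 ?_)
  exact div_nonpos_of_nonpos_of_nonneg (neg_nonpos.2 (sq_nonneg _)) (by positivity)

lemma gaussianReal_abs_sub_lt_le (m : ℝ) {v : ℝ≥0} (hv : v ≠ 0) (r : ℝ) :
    gaussianReal m v {x | |x - m| < r} ≤ ENNReal.ofReal (2 * r / √(2 * π * v)) := by
  have hset : {x | |x - m| < r} = Ioo (m - r) (m + r) := by
    rw [← Real.ball_eq_Ioo]; rfl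
  calc gaussianReal m v {x | |x - m| < r}
      = ∫⁻ x in Ioo (m - r) (m + r), gaussianPDF m v x := by rw [gaussianReal_apply m hv, hset]
    _ ≤ ∫⁻ _ in Ioo (m - r) (m + r), ENNReal.ofReal (√(2 * π * v))⁻¹ :=
        lintegral_mono fun x => ENNReal.ofReal_le_ofReal (gaussianPDFReal_le_inv_sqrt m v x)
    _ = ENNReal.ofReal (2 * r / √(2 * π * v)) := by
        rw [setLIntegral_const, Real.volume_Ioo, ← ENNReal.ofReal_mul (by positivity)]
        congr 1; ring

lemma ProbabilityTheory.HasLaw.measureReal_abs_lt_half_sqrt_le {Ω : Type*} [MeasurableSpace Ω]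
    {μ : Measure Ω} {Z : Ω → ℝ} {v : ℝ≥0} (hZ : HasLaw Z (gaussianReal 0 v) μ) :
    μ.real {ω | |Z ω| < √v / 2} ≤ 2 / 5 := by
  rcases eq_or_ne v 0 with rfl | hv
  · norm_num [(abs_nonneg _).not_gt]
  rw [hZ.measureReal_eq (p := fun x => |x| < √v / 2)
    (measurableSet_lt measurable_abs measurable_const)]
  have hbound := gaussianReal_abs_sub_lt_le 0 hv (√v / 2)
  simp only [sub_zero] at hbound
  refine ENNReal.toReal_le_of_le_ofReal (by norm_num) (hbound.trans (ENNReal.ofReal_le_ofReal ?_))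
  have hsv : 0 < √(v : ℝ) := sqrt_pos.2 (by positivity)
  have h2π : 5 / 2 ≤ √(2 * π) := le_sqrt_of_sq_le (by nlinarith [pi_gt_d2])
  rw [sqrt_mul (by positivity), show 2 * (√(v : ℝ) / 2) = √v by ring,
    div_mul_cancel_right₀ hsv.ne', inv_le_comm₀ (by positivity) (by norm_num)]
  linarith

lemma ProbabilityTheory.HasLaw.integral_sq_of_gaussianReal {Ω : Type*} [MeasurableSpace Ω]
    {μ : Measure Ω} {Z : Ω → ℝ} {v : ℝ≥0} (hZ : HasLaw Z (gaussianReal 0 v) μ) :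
    ∫ ω, Z ω ^ 2 ∂μ = v := by
  have := hZ.integral_comp (f := fun x : ℝ => x ^ 2) (by fun_prop)
  rw [Function.comp_def] at this
  rw [this, ← variance_id_gaussianReal (μ := 0), variance_eq_integral measurable_id.aemeasurable]
  simp [integral_id_gaussianReal]

lemma MonotoneOn.measurable_comp_abs {Φ : ℝ → ℝ} (hΦ : MonotoneOn Φ (Ici 0)) :
    Measurable fun x => Φ |x| := by
  have hmono : Monotone fun x => Φ (max x 0) := fun a b hab =>
    hΦ (le_max_right a 0) (le_max_right b 0) (max_le_max_right 0 hab)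
  simpa [Function.comp_def] using hmono.measurable.comp measurable_abs

section

variable {Ω : Type*} [MeasurableSpace Ω] {μ : Measure Ω} {Φ : ℝ → ℝ}

lemma measurableSet_setOf_forall_le {κ : Type*} [Countable κ] {F : κ → Ω → ℝ}
    (hF : ∀ n, Measurable (F n)) (c : ℝ) : MeasurableSet {ω | ∀ n, F n ω ≤ c} := by
  simpa only [ofPred_forall] using
    MeasurableSet.iInter fun n => measurableSet_le (hF n) measurable_const

lemma exists_measure_compl_lt_of_ae_bddAbove [IsFiniteMeasure μ] {κ : Type*} [Countable κ]
    {F : κ → Ω → ℝ} (hF : ∀ n, Measurable (F n)) (hbdd : ∀ᵐ ω ∂μ, BddAbove (range fun n => F n ω))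
    {ε : ℝ≥0∞} (hε : 0 < ε) : ∃ k : ℕ, μ {ω | ∀ n, F n ω ≤ k}ᶜ < ε := by
  set E : ℕ → Set Ω := fun k => {ω | ∀ n, F n ω ≤ k}ᶜ
  have hanti : Antitone E := fun k l hkl =>
    compl_subset_compl.2 fun ω hω n => (hω n).trans (by exact_mod_cast hkl)
  have hnull : μ (⋂ k, E k) = 0 := by
    refine measure_mono_null ?_ (ae_iff.1 hbdd)
    rintro ω hω ⟨b, hb⟩
    obtain ⟨n, hn⟩ : ∃ n, (⌈b⌉₊ : ℝ) < F n ω := by simpa [E] using mem_iInter.1 hω ⌈b⌉₊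
    exact (hn.trans_le (hb ⟨n, rfl⟩)).not_ge (Nat.le_ceil b)
  have hlim := tendsto_measure_iInter_atTop
    (fun k => (measurableSet_setOf_forall_le hF _).compl.nullMeasurableSet) hanti
    ⟨0, measure_ne_top μ _⟩
  rw [hnull] at hlim
  exact (hlim.eventually (gt_mem_nhds hε)).exists

variable [IsProbabilityMeasure μ]

lemma ofReal_le_two_mul_setLIntegral_of_hasLaw (hΦ : MonotoneOn Φ (Ici 0)) {Z : Ω → ℝ}
    (hZm : Measurable Z) {v : ℝ≥0} (hZ : HasLaw Z (gaussianReal 0 v) μ) {A : Set Ω}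
    (hA : MeasurableSet A) (hAc : μ.real Aᶜ ≤ 1 / 10) :
    ENNReal.ofReal (Φ (√v / 2)) ≤ 2 * ∫⁻ ω in A, ENNReal.ofReal (Φ |Z ω|) ∂μ := by
  set B := {ω | √v / 2 ≤ |Z ω|}
  have hB : MeasurableSet B := measurableSet_le measurable_const hZm.abs
  have hAB : 1 ≤ 2 * μ (A ∩ B) := by
    have hBc : Bᶜ = {ω | |Z ω| < √v / 2} := by ext; simp [B]
    have hABc : μ.real (A ∩ B)ᶜ ≤ 1 / 2 := by
      rw [compl_inter]
      linarith [measureReal_union_le (μ := μ) Aᶜ Bᶜ, hBc ▸ hZ.measureReal_abs_lt_half_sqrt_le]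
    rw [measureReal_compl (hA.inter hB), probReal_univ] at hABc
    calc (1 : ℝ≥0∞) = 2 * ENNReal.ofReal (1 / 2) := by
          rw [← ENNReal.ofReal_ofNat, ← ENNReal.ofReal_mul (by norm_num)]; norm_num
      _ ≤ 2 * μ (A ∩ B) := by
          rw [← ofReal_measureReal]; gcongr; linarith
  calc ENNReal.ofReal (Φ (√v / 2))
      ≤ 2 * μ (A ∩ B) * ENNReal.ofReal (Φ (√v / 2)) := le_mul_of_one_le_left (by positivity) hAB
    _ = 2 * ∫⁻ _ in A ∩ B, ENNReal.ofReal (Φ (√v / 2)) ∂μ := by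
        rw [setLIntegral_const, mul_assoc, mul_comm (μ _)]
    _ ≤ 2 * ∫⁻ ω in A ∩ B, ENNReal.ofReal (Φ |Z ω|) ∂μ := by
        gcongr 1
        refine setLIntegral_mono (hΦ.measurable_comp_abs.comp hZm).ennreal_ofReal fun ω hω => ?_
        exact ENNReal.ofReal_le_ofReal
          (hΦ (by positivity : (0 : ℝ) ≤ √v / 2) (abs_nonneg (Z ω)) hω.2)
    _ ≤ 2 * ∫⁻ ω in A, ENNReal.ofReal (Φ |Z ω|) ∂μ := by
        gcongr; exact inter_subset_left

theorem bddAbove_range_sum_of_ae_bddAbove_sum_abs {κ ι : Type*} [Countable κ]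
    (hΦ : MonotoneOn Φ (Ici 0)) (hΦ0 : 0 ≤ Φ 0) (s : κ → Finset ι) {Z : κ → ι → Ω → ℝ}
    (hZm : ∀ n i, Measurable (Z n i)) {v : κ → ι → ℝ≥0}
    (hZ : ∀ n i, HasLaw (Z n i) (gaussianReal 0 (v n i)) μ)
    (hbdd : ∀ᵐ ω ∂μ, BddAbove (range fun n => ∑ i ∈ s n, Φ |Z n i ω|)) :
    BddAbove (range fun n => ∑ i ∈ s n, Φ (√(v n i) / 2)) := by
  have hΦnn : ∀ x, 0 ≤ x → 0 ≤ Φ x := fun x hx => hΦ0.trans (hΦ self_mem_Ici hx hx)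
  have hterm : ∀ n i, Measurable fun ω => Φ |Z n i ω| :=
    fun n i => hΦ.measurable_comp_abs.comp (hZm n i)
  have hsum : ∀ n, Measurable fun ω => ∑ i ∈ s n, Φ |Z n i ω| :=
    fun n => Finset.measurable_sum _ fun i _ => hterm n i
  obtain ⟨k, hk⟩ := exists_measure_compl_lt_of_ae_bddAbove hsum hbdd
    (ε := ENNReal.ofReal (1 / 10)) (by norm_num)
  set A := {ω | ∀ n, ∑ i ∈ s n, Φ |Z n i ω| ≤ k}
  have hAc : μ.real Aᶜ ≤ 1 / 10 := ENNReal.toReal_le_of_le_ofReal (by norm_num) hk.le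
  refine ⟨2 * k, ?_⟩
  rintro _ ⟨n, rfl⟩
  rw [← ENNReal.ofReal_le_ofReal_iff (by positivity)]
  calc ENNReal.ofReal (∑ i ∈ s n, Φ (√(v n i) / 2))
      = ∑ i ∈ s n, ENNReal.ofReal (Φ (√(v n i) / 2)) :=
        ENNReal.ofReal_sum_of_nonneg fun i _ => hΦnn _ (by positivity)
    _ ≤ ∑ i ∈ s n, 2 * ∫⁻ ω in A, ENNReal.ofReal (Φ |Z n i ω|) ∂μ :=
        Finset.sum_le_sum fun i _ => ofReal_le_two_mul_setLIntegral_of_hasLaw hΦ (hZm n i)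
          (hZ n i) (measurableSet_setOf_forall_le hsum _) hAc
    _ = 2 * ∫⁻ ω in A, ENNReal.ofReal (∑ i ∈ s n, Φ |Z n i ω|) ∂μ := by
        rw [← Finset.mul_sum, ← lintegral_finsetSum _ fun i _ => (hterm n i).ennreal_ofReal]
        simp_rw [ENNReal.ofReal_sum_of_nonneg fun i _ => hΦnn _ (abs_nonneg _)]
    _ ≤ 2 * ∫⁻ _ in A, ENNReal.ofReal k ∂μ := by
        gcongr 1
        exact setLIntegral_mono measurable_const fun ω hω => ENNReal.ofReal_le_ofReal (hω n)
    _ ≤ ENNReal.ofReal (2 * k) := by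
        rw [setLIntegral_const, ENNReal.ofReal_mul zero_le_two, ENNReal.ofReal_ofNat]
        gcongr
        exact mul_le_of_le_one_right (by positivity) prob_le_one

end

lemma exists_seq_of_not_bddAbove_partitionSums {g : ℝ → ℝ → ℝ} {a b : ℝ}
    (h : ¬BddAbove (partitionSums g a b)) :
    ∃ (m : ℕ → ℕ) (τ : ℕ → ℕ → ℝ),
      (∀ n (g' : ℝ → ℝ → ℝ), ∑ i ∈ Finset.range (m n), g' (τ n i) (τ n (i + 1)) ∈
        partitionSums g' a b) ∧
      ∀ n : ℕ, (n : ℝ) < ∑ i ∈ Finset.range (m n), g (τ n i) (τ n (i + 1)) := by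
  choose S hS hlt using fun n : ℕ => not_bddAbove_iff.1 h n
  choose m τ hm h0 h1 hτ hSeq using hS
  exact ⟨m, τ, fun n g' => ⟨m n, τ n, hm n, h0 n, h1 n, hτ n, rfl⟩, fun n => hSeq n ▸ hlt n⟩

lemma exists_hasLaw_sub_of_forall_gaussian {Ω : Type*} [MeasurableSpace Ω] {μ : Measure Ω}
    {X : ℝ → Ω → ℝ} (hmeas : ∀ t, Measurable (X t))
    (hGauss : ∀ (s : Finset ℝ) (a : ℝ → ℝ), ∃ v : ℝ≥0,
      μ.map (fun ω => ∑ t ∈ s, a t * X t ω) = gaussianReal 0 v) (s t : ℝ) :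
    ∃ v : ℝ≥0, HasLaw (fun ω => X s ω - X t ω) (gaussianReal 0 v) μ := by
  -- these coefficients also give `X s - X t` when `s = t`
  obtain ⟨v, hv⟩ := hGauss {s, t} fun u => (if u = s then 1 else 0) - (if u = t then 1 else 0)
  refine ⟨v, ((hmeas s).sub (hmeas t)).aemeasurable, ?_⟩
  simpa [sub_mul, Finset.sum_sub_distrib] using hv

lemma StrictMonoOn.nonneg_of_doubling_le {Φ : ℝ → ℝ} (hmono : StrictMonoOn Φ (Ici 0))
    (hΦ0 : Φ 0 = 0) {C : ℝ} (hΔ2 : ∀ x ≥ (0 : ℝ), Φ (2 * x) ≤ C * Φ x) : 0 ≤ C := by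
  have h1 : 0 < Φ 1 := hΦ0 ▸ hmono self_mem_Ici (mem_Ici.2 zero_le_one) one_pos
  have h2 : Φ 1 < Φ 2 := hmono (mem_Ici.2 zero_le_one) (mem_Ici.2 zero_le_two) one_lt_two
  have h3 : Φ 2 ≤ C * Φ 1 := by simpa using hΔ2 1 zero_le_one
  nlinarith

theorem gaussian_variation_necessary_general {Ω : Type*} [MeasurableSpace Ω] (μ : Measure Ω)
    [IsProbabilityMeasure μ] (X : ℝ → Ω → ℝ) (hmeas : ∀ t, Measurable (X t))
    (hGauss : ∀ (s : Finset ℝ) (a : ℝ → ℝ), ∃ v : NNReal,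
      Measure.map (fun ω => ∑ t ∈ s, a t * X t ω) μ = gaussianReal 0 v)
    (Φ : ℝ → ℝ)
    (hmono : StrictMonoOn Φ (Set.Ici 0)) (hΦ0 : Φ 0 = 0)
    (C : ℝ) (hΔ2 : ∀ x ≥ (0 : ℝ), Φ (2 * x) ≤ C * Φ x)
    (d : ℝ → ℝ → ℝ) (hd : ∀ s t, d s t = Real.sqrt (∫ ω, (X s ω - X t ω) ^ 2 ∂μ))
    (hVar : ∀ᵐ ω ∂μ, BddAbove (partitionSums (fun s t => Φ |X t ω - X s ω|) 0 1)) :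
    BddAbove (partitionSums (fun s t => Φ (Real.sqrt (2 / Real.pi) * d s t)) 0 1) := by
  choose v hv using exists_hasLaw_sub_of_forall_gaussian hmeas hGauss
  have hC : 0 ≤ C := hmono.nonneg_of_doubling_le hΦ0 hΔ2
  have hterm : ∀ s t, Φ (√(2 / π) * d s t) ≤ C * Φ (√(v s t) / 2) := by
    intro s t
    have hc : √(2 / π) ≤ 1 := sqrt_le_one.2 ((div_le_one pi_pos).2 two_le_pi)
    rw [hd, (hv s t).integral_sq_of_gaussianReal]
    refine (hmono.monotoneOn (mem_Ici.2 (by positivity)) (mem_Ici.2 (by positivity)) ?_).trans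
      (hΔ2 _ (by positivity))
    linarith [mul_le_of_le_one_left (sqrt_nonneg (v s t)) hc]
  by_contra hunb
  obtain ⟨m, τ, hpart, hlarge⟩ := exists_seq_of_not_bddAbove_partitionSums hunb
  obtain ⟨K, hK⟩ := bddAbove_range_sum_of_ae_bddAbove_sum_abs hmono.monotoneOn hΦ0.ge
    (fun n => Finset.range (m n)) (Z := fun n i ω => X (τ n i) ω - X (τ n (i + 1)) ω)
    (fun n i => (hmeas _).sub (hmeas _)) (fun n i => hv _ _) <| by
      filter_upwards [hVar] with ω ⟨B, hB⟩
      have hsymm : (fun s t => Φ |X t ω - X s ω|) = fun s t => Φ |X s ω - X t ω| := by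
        funext s t; rw [abs_sub_comm]
      rw [hsymm] at hB
      exact ⟨B, by rintro _ ⟨n, rfl⟩; exact hB (hpart n _)⟩
  obtain ⟨n, hn⟩ := exists_nat_ge (C * K)
  have hsum_le : ∑ i ∈ Finset.range (m n), Φ (√(2 / π) * d (τ n i) (τ n (i + 1))) ≤ C * K :=
    calc _ ≤ C * ∑ i ∈ Finset.range (m n), Φ (√(v (τ n i) (τ n (i + 1))) / 2) := by
          rw [Finset.mul_sum]; exact Finset.sum_le_sum fun i _ => hterm _ _
      _ ≤ C * K := mul_le_mul_of_nonneg_left (hK ⟨n, rfl⟩) hC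
  linarith [hlarge n]

theorem gaussian_variation_necessary {Ω : Type*} [MeasurableSpace Ω] (μ : Measure Ω)
    [IsProbabilityMeasure μ] (X : ℝ → Ω → ℝ) (hmeas : ∀ t, Measurable (X t))
    (hGauss : ∀ (s : Finset ℝ) (a : ℝ → ℝ), ∃ v : NNReal,
      Measure.map (fun ω => ∑ t ∈ s, a t * X t ω) μ = gaussianReal 0 v)
    (Φ : ℝ → ℝ) (hconv : ConvexOn ℝ (Set.Ici 0) Φ)
    (hmono : StrictMonoOn Φ (Set.Ici 0)) (hΦ0 : Φ 0 = 0)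
    (C : ℝ) (hΔ2 : ∀ x ≥ (0 : ℝ), Φ (2 * x) ≤ C * Φ x)
    (d : ℝ → ℝ → ℝ) (hd : ∀ s t, d s t = Real.sqrt (∫ ω, (X s ω - X t ω) ^ 2 ∂μ))
    (hVar : ∀ᵐ ω ∂μ, BddAbove (partitionSums (fun s t => Φ |X t ω - X s ω|) 0 1)) :
    BddAbove (partitionSums (fun s t => Φ (Real.sqrt (2 / Real.pi) * d s t)) 0 1) :=
  gaussian_variation_necessary_general μ X hmeas hGauss Φ hmono hΦ0 C hΔ2 d hd hVar
end

section
/- For every p ≥ 1 and every f : [0,1] → ℝ of bounded p-variation, ∫₀¹ limsup_{h→0} |f(x+h)−f(x)|^p / |h| dx ≤ 𝒱_p(f). -/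
/-!
Let `V x` be the supremum of the partition sums of `φ s t = |f t - f s| ^ p` over `[0, x]`.
Appending the interval `[x, x + h]` to a partition of `[0, x]` gives
`V x + |f (x + h) - f x| ^ p ≤ V (x + h)`, so the integrand is dominated by the upper derivative
of the monotone function `V`. By Lebesgue's theorem `V` is differentiable almost everywhere, and
`∫₀¹ V' ≤ V 1 - V 0 = 𝒱_p(f)`.
-/

open MeasureTheory Topology

open Set Filter

noncomputable def variationFrom (φ : ℝ → ℝ → ℝ) (a x : ℝ) : ℝ := sSup (partitionSums φ a x)

section partitionSums

variable {φ : ℝ → ℝ → ℝ} {a b c S : ℝ}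

theorem partitionSums_eq_empty_of_le (hba : b ≤ a) : partitionSums φ a b = ∅ := by
  refine eq_empty_of_forall_notMem ?_
  rintro _ ⟨n, t, hn, rfl, rfl, ht, -⟩
  have : StrictMonoOn t (Iic n) := strictMonoOn_Iic_of_lt_succ fun m hm => by
    simpa only [Order.succ_eq_add_one] using ht m hm
  exact (this (by simp) (by simp) hn).not_ge hba

theorem mem_partitionSums_of_lt (hab : a < b) : φ a b ∈ partitionSums φ a b :=
  ⟨1, fun i => if i = 0 then a else b, one_pos, rfl, rfl, by simpa using hab, by simp⟩

theorem add_mem_partitionSums (hbc : b < c) (hS : S ∈ partitionSums φ a b) :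
    S + φ b c ∈ partitionSums φ a c := by
  obtain ⟨n, t, hn, rfl, rfl, ht, rfl⟩ := hS
  refine ⟨n + 1, fun i => if i ≤ n then t i else c, by omega, by simp, by simp, ?_, ?_⟩
  · intro i hi
    rcases lt_or_eq_of_le (Nat.le_of_lt_succ hi) with hi | rfl
    · simpa [hi.le, Nat.succ_le_of_lt hi] using ht i hi
    · simpa using hbc
  · rw [Finset.sum_range_succ]
    refine congrArg₂ _ (Finset.sum_congr rfl fun i hi => ?_) (by simp)
    have hi := Finset.mem_range.1 hi
    simp [hi.le, Nat.succ_le_of_lt hi]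

theorem BddAbove.partitionSums_of_le (hφ : ∀ s t, 0 ≤ φ s t)
    (hbdd : BddAbove (partitionSums φ a c)) (hbc : b ≤ c) : BddAbove (partitionSums φ a b) := by
  rcases hbc.lt_or_eq with hbc | rfl
  · obtain ⟨M, hM⟩ := hbdd
    exact ⟨M, fun S hS => by linarith [hM (add_mem_partitionSums hbc hS), hφ b c]⟩
  · exact hbdd

theorem variationFrom_nonneg (hφ : ∀ s t, 0 ≤ φ s t) : 0 ≤ variationFrom φ a b := by
  refine Real.sSup_nonneg ?_
  rintro _ ⟨n, t, -, -, -, -, rfl⟩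
  exact Finset.sum_nonneg fun i _ => hφ _ _

theorem variationFrom_of_le (hba : b ≤ a) : variationFrom φ a b = 0 := by
  rw [variationFrom, partitionSums_eq_empty_of_le hba, Real.sSup_empty]

theorem variationFrom_add_le (hbdd : BddAbove (partitionSums φ a c)) (hab : a < b)
    (hbc : b < c) : variationFrom φ a b + φ b c ≤ variationFrom φ a c := by
  rw [← le_sub_iff_add_le]
  refine csSup_le ⟨_, mem_partitionSums_of_lt hab⟩ fun S hS => ?_
  exact le_sub_iff_add_le.2 (le_csSup hbdd (add_mem_partitionSums hbc hS))

theorem monotoneOn_variationFrom (hφ : ∀ s t, 0 ≤ φ s t)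
    (hbdd : BddAbove (partitionSums φ a b)) : MonotoneOn (variationFrom φ a) (Iic b) := by
  intro x _ y hy hxy
  rcases le_or_gt x a with hxa | hax
  · rw [variationFrom_of_le hxa]
    exact variationFrom_nonneg hφ
  rcases hxy.eq_or_lt with rfl | hxy
  · exact le_rfl
  linarith [variationFrom_add_le (hbdd.partitionSums_of_le hφ hy) hax hxy, hφ x y]

theorem eventually_le_slope_variationFrom (hφ : ∀ s t, 0 ≤ φ s t)
    (hsymm : ∀ s t, φ s t = φ t s) (hbdd : BddAbove (partitionSums φ a b)) {x : ℝ}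
    (hx : x ∈ Ioo a b) :
    ∀ᶠ h in 𝓝[≠] 0, φ x (x + h) / |h| ≤ (variationFrom φ a (x + h) - variationFrom φ a x) / h := by
  have hnear : ∀ᶠ h in 𝓝[≠] (0 : ℝ), x + h ∈ Ioo a b :=
    nhdsWithin_le_nhds <| ((continuous_const_add x).tendsto' 0 x (add_zero x)).eventually
      (Ioo_mem_nhds hx.1 hx.2)
  filter_upwards [hnear, self_mem_nhdsWithin] with h hxh (hh : h ≠ 0)
  have hbdd' {c : ℝ} (hc : c ∈ Ioo a b) := hbdd.partitionSums_of_le hφ hc.2.le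
  rcases hh.lt_or_gt with hneg | hpos
  · have := variationFrom_add_le (hbdd' hx) hxh.1 (by linarith : x + h < x)
    rw [abs_of_neg hneg, hsymm, ← neg_div_neg_eq _ h, neg_sub]
    exact div_le_div_of_nonneg_right (by linarith) (by linarith)
  · have := variationFrom_add_le (hbdd' hxh) hx.1 (by linarith : x < x + h)
    rw [abs_of_pos hpos]
    exact div_le_div_of_nonneg_right (by linarith) hpos.le

end partitionSums

theorem limsup_le_ofReal_deriv {V : ℝ → ℝ} {x : ℝ} (hV : DifferentiableAt ℝ V x)
    {F : ℝ → ℝ} (hF : ∀ᶠ h in 𝓝[≠] 0, F h ≤ (V (x + h) - V x) / h) :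
    limsup (fun h => ENNReal.ofReal (F h)) (𝓝[≠] 0) ≤ ENNReal.ofReal (deriv V x) := by
  have hslope : Tendsto (fun h => (V (x + h) - V x) / h) (𝓝[≠] 0) (𝓝 (deriv V x)) := by
    simpa only [smul_eq_mul, inv_mul_eq_div] using hV.hasDerivAt.tendsto_slope_zero
  exact (limsup_le_limsup (hF.mono fun _ => ENNReal.ofReal_le_ofReal)).trans_eq
    ((ENNReal.continuous_ofReal.tendsto _).comp hslope).limsup_eq

theorem MonotoneOn.lintegral_ofReal_deriv_le {V : ℝ → ℝ} {a b : ℝ} (hab : a ≤ b)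
    (hV : MonotoneOn V (Icc a b)) :
    ∫⁻ x in Ioo a b, ENNReal.ofReal (deriv V x) ≤ ENNReal.ofReal (V b - V a) := by
  have hint : IntegrableOn (deriv V) (Ioo a b) :=
    (intervalIntegrable_iff_integrableOn_Ioo_of_le hab).1
      (uIcc_of_le hab ▸ hV).intervalIntegrable_deriv
  have hnonneg : 0 ≤ᵐ[volume.restrict (Ioo a b)] deriv V :=
    ae_restrict_of_forall_mem measurableSet_Ioo fun x hx => by
      rw [← derivWithin_of_isOpen isOpen_Ioo hx]
      exact (hV.mono Ioo_subset_Icc_self).derivWithin_nonneg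
  have hmem := (uIcc_of_le hab ▸ hV).intervalIntegral_deriv_mem_uIcc
  rw [uIcc_of_le (sub_nonneg.2 (hV ⟨le_rfl, hab⟩ ⟨hab, le_rfl⟩ hab)),
    intervalIntegral.integral_of_le hab, integral_Ioc_eq_integral_Ioo] at hmem
  rw [← ofReal_integral_eq_lintegral_ofReal hint hnonneg]
  exact ENNReal.ofReal_le_ofReal hmem.2

theorem marcinkiewicz_inequality_general (p : ℝ) (f : ℝ → ℝ)
    (hbdd : BddAbove (partitionSums (fun s t => |f t - f s| ^ p) 0 1)) :
    ∫⁻ x in Set.Ioo (0 : ℝ) 1, Filter.limsup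
        (fun h : ℝ => ENNReal.ofReal (|f (x + h) - f x| ^ p / |h|)) (𝓝[≠] (0 : ℝ)) ≤
      ENNReal.ofReal (sSup (partitionSums (fun s t => |f t - f s| ^ p) 0 1)) := by
  set φ : ℝ → ℝ → ℝ := fun s t => |f t - f s| ^ p
  have hφ : ∀ s t, 0 ≤ φ s t := fun _ _ => by positivity
  have hsymm : ∀ s t, φ s t = φ t s := fun s t => by simp only [φ, abs_sub_comm]
  have hV := monotoneOn_variationFrom hφ hbdd
  calc _ ≤ ∫⁻ x in Ioo 0 1, ENNReal.ofReal (deriv (variationFrom φ 0) x) := by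
        refine lintegral_mono_ae ?_
        filter_upwards [ae_restrict_mem measurableSet_Ioo,
          (hV.mono (Ioo_subset_Iio_self.trans Iio_subset_Iic_self)).ae_differentiableWithinAt
            measurableSet_Ioo] with x hx hdiff
        exact limsup_le_ofReal_deriv (hdiff.differentiableAt (Ioo_mem_nhds hx.1 hx.2))
          (eventually_le_slope_variationFrom hφ hsymm hbdd hx)
    _ ≤ ENNReal.ofReal (variationFrom φ 0 1 - variationFrom φ 0 0) :=
        (hV.mono Icc_subset_Iic_self).lintegral_ofReal_deriv_le zero_le_one
    _ = ENNReal.ofReal (sSup (partitionSums φ 0 1)) := by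
        rw [variationFrom_of_le le_rfl, sub_zero, variationFrom]

theorem marcinkiewicz_inequality (p : ℝ) (hp : 1 ≤ p) (f : ℝ → ℝ) (hf : Measurable f)
    (hbdd : BddAbove (partitionSums (fun s t => |f t - f s| ^ p) 0 1)) :
    ∫⁻ x in Set.Ioo (0 : ℝ) 1, Filter.limsup
        (fun h : ℝ => ENNReal.ofReal (|f (x + h) - f x| ^ p / |h|)) (𝓝[≠] (0 : ℝ)) ≤
      ENNReal.ofReal (sSup (partitionSums (fun s t => |f t - f s| ^ p) 0 1)) :=
  marcinkiewicz_inequality_general p f hbdd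
end

section
/- Let X : [0,1] → ℝ be a continuous function, Φ, Φ̃ : ℝ₊ → ℝ₊ with Φ̃(x)/Φ(x) → ∞ as x → 0⁺, Φ, Φ̃ > 0 on (0,∞). If the limiting Φ-variation 𝒱*_Φ(X) > 0 (possibly +∞), then the Φ̃-variation 𝒱_{Φ̃}(X) = ∞. -/
/-! For every `K`, the ratio condition gives `η > 0` with `K Φ(x) ≤ Φ̃(x)` on `[0, η)`, and uniform
continuity of `X` gives `δ > 0` such that all increments of `X` over partitions of mesh `≤ δ` lie
in `[0, η)`. Comparing term by term, `K · 𝒱*_Φ(X) ≤ 𝒱_{Φ̃}(X)`; since `𝒱*_Φ(X) > 0` and `K` is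
arbitrary, `𝒱_{Φ̃}(X) = ∞`. -/

open MeasureTheory Topology ENNReal

/-- The limiting `g`-variation over partitions of `[a,b]` with mesh at most `δ`,
as `δ → 0`, with values in `ℝ≥0∞`. -/
noncomputable def limitingVariation (g : ℝ → ℝ → ℝ) (a b : ℝ) : ℝ≥0∞ :=
  ⨅ (δ : ℝ) (_ : 0 < δ), sSup {S : ℝ≥0∞ | ∃ (n : ℕ) (t : ℕ → ℝ), 0 < n ∧
    t 0 = a ∧ t n = b ∧ (∀ i < n, t i < t (i + 1)) ∧ (∀ i < n, t (i + 1) - t i ≤ δ) ∧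
    S = ∑ i ∈ Finset.range n, ENNReal.ofReal (g (t i) (t (i + 1)))}

/-- The set of all sums `∑ g(tᵢ, tᵢ₊₁)` in `ℝ≥0∞` over partitions of `[a,b]`. -/
def partitionSumsE (g : ℝ → ℝ → ℝ) (a b : ℝ) : Set ℝ≥0∞ :=
  {S | ∃ (n : ℕ) (t : ℕ → ℝ), 0 < n ∧ t 0 = a ∧ t n = b ∧
    (∀ i < n, t i < t (i + 1)) ∧
    S = ∑ i ∈ Finset.range n, ENNReal.ofReal (g (t i) (t (i + 1)))}

open Set Filter

theorem mem_Icc_of_forall_lt_succ {β : Type*} [Preorder β] {t : ℕ → β} {n : ℕ}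
    (ht : ∀ i < n, t i < t (i + 1)) {i : ℕ} (hi : i ≤ n) : t i ∈ Icc (t 0) (t n) := by
  have hmono : MonotoneOn t (Iic n) :=
    (strictMonoOn_Iic_of_lt_succ (by simpa only [Order.succ_eq_add_one] using ht)).monotoneOn
  exact ⟨hmono (Nat.zero_le n) hi (Nat.zero_le i), hmono hi (mem_Iic.2 le_rfl) hi⟩

theorem ENNReal.eq_top_of_forall_natCast_mul_le {L S : ℝ≥0∞} (hL : L ≠ 0)
    (h : ∀ n : ℕ, (n : ℝ≥0∞) * L ≤ S) : S = ⊤ :=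
  top_unique <| calc
    ⊤ = (⨆ n : ℕ, (n : ℝ≥0∞)) * L := by rw [ENNReal.iSup_natCast, ENNReal.top_mul hL]
    _ = ⨆ n : ℕ, (n : ℝ≥0∞) * L := ENNReal.iSup_mul _ _
    _ ≤ S := iSup_le h

theorem ENNReal.ofReal_mul_ofReal_le_of_le_div {K a b : ℝ} (hK : 0 ≤ K) (h : K ≤ b / a) :
    ENNReal.ofReal K * ENNReal.ofReal a ≤ ENNReal.ofReal b := by
  rcases le_or_gt a 0 with ha | ha
  · simp [ENNReal.ofReal_of_nonpos ha]
  · rw [← ENNReal.ofReal_mul hK]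
    exact ENNReal.ofReal_le_ofReal ((le_div_iff₀ ha).mp h)

theorem mul_limitingVariation_le_sSup_partitionSumsE {g h : ℝ → ℝ → ℝ} {a b δ : ℝ}
    {K : ℝ≥0∞} (hδ : 0 < δ)
    (hgh : ∀ s ∈ Icc a b, ∀ t ∈ Icc a b, s ≤ t → t - s ≤ δ →
      K * ENNReal.ofReal (g s t) ≤ ENNReal.ofReal (h s t)) :
    K * limitingVariation g a b ≤ sSup (partitionSumsE h a b) := by
  refine (mul_le_mul' le_rfl (iInf₂_le δ hδ)).trans ?_
  rw [ENNReal.mul_sSup]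
  refine iSup₂_le ?_
  rintro _ ⟨n, t, hn, ht0, htn, hmono, hmesh, rfl⟩
  have hmem : ∀ i ≤ n, t i ∈ Icc a b := fun i hi => ht0 ▸ htn ▸ mem_Icc_of_forall_lt_succ hmono hi
  rw [Finset.mul_sum]
  refine le_sSup_of_le ⟨n, t, hn, ht0, htn, hmono, rfl⟩ (Finset.sum_le_sum fun i hi => ?_)
  have hi := Finset.mem_range.mp hi
  exact hgh _ (hmem i hi.le) _ (hmem (i + 1) hi) (hmono i hi).le (hmesh i hi)

theorem exists_pos_forall_mul_le_of_tendsto_div_atTop {Φ Φt : ℝ → ℝ} (hΦ0 : Φ 0 = 0)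
    (hratio : Tendsto (fun x => Φt x / Φ x) (𝓝[>] 0) atTop) {K : ℝ} (hK : 0 ≤ K) :
    ∃ η > 0, ∀ x ∈ Ico 0 η, ENNReal.ofReal K * ENNReal.ofReal (Φ x) ≤ ENNReal.ofReal (Φt x) := by
  obtain ⟨η, hη, hKη⟩ :=
    mem_nhdsGT_iff_exists_Ioo_subset.mp (hratio.eventually (eventually_ge_atTop K))
  refine ⟨η, hη, fun x hx => ?_⟩
  rcases hx.1.eq_or_lt with rfl | hx0
  · simp [hΦ0]
  · exact ENNReal.ofReal_mul_ofReal_le_of_le_div hK (hKη ⟨hx0, hx.2⟩)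

theorem optimality_of_variation_function_general (X : ℝ → ℝ) (hX : ContinuousOn X (Set.Icc 0 1))
    (Φ Φt : ℝ → ℝ) (hΦ0 : Φ 0 = 0)
    (hratio : Filter.Tendsto (fun x => Φt x / Φ x) (𝓝[>] (0 : ℝ)) Filter.atTop)
    (hpos : 0 < limitingVariation (fun s t => Φ |X t - X s|) 0 1) :
    sSup (partitionSumsE (fun s t => Φt |X t - X s|) 0 1) = ⊤ := by
  refine ENNReal.eq_top_of_forall_natCast_mul_le hpos.ne' fun n => ?_
  obtain ⟨η, hη, hΦη⟩ := exists_pos_forall_mul_le_of_tendsto_div_atTop hΦ0 hratio n.cast_nonneg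
  obtain ⟨δ, hδ, hXδ⟩ :=
    Metric.uniformContinuousOn_iff.mp (isCompact_Icc.uniformContinuousOn_of_continuous hX) η hη
  refine mul_limitingVariation_le_sSup_partitionSumsE (half_pos hδ) fun s hs t ht hst hmesh => ?_
  have hsmall : |X t - X s| < η :=
    hXδ t ht s hs (abs_sub_lt_iff.2 ⟨by linarith, by linarith⟩)
  simpa only [ENNReal.ofReal_natCast] using hΦη _ ⟨abs_nonneg _, hsmall⟩

theorem optimality_of_variation_function (X : ℝ → ℝ) (hX : ContinuousOn X (Set.Icc 0 1))
    (Φ Φt : ℝ → ℝ) (hΦ0 : Φ 0 = 0) (hΦt0 : Φt 0 = 0)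
    (hΦpos : ∀ x > (0 : ℝ), 0 < Φ x) (hΦtpos : ∀ x > (0 : ℝ), 0 < Φt x)
    (hratio : Filter.Tendsto (fun x => Φt x / Φ x) (𝓝[>] (0 : ℝ)) Filter.atTop)
    (hpos : 0 < limitingVariation (fun s t => Φ |X t - X s|) 0 1) :
    sSup (partitionSumsE (fun s t => Φt |X t - X s|) 0 1) = ⊤ :=
  optimality_of_variation_function_general X hX Φ Φt hΦ0 hratio hpos
end
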